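/- Let ω > 0 be a real number and n ≥ 1 an integer. If z̃ ∈ ℂ with z̃ ≠ 0 satisfies S_n^ω(z̃) = 0, then (d/dz)S_n^ω(z̃) ≠ 0; that is, every zero of S_n^ω other than possibly the origin is simple. -/

import Mathlib

open Finset Polynomial

/-- The monic skyburst polynomial
`S_n^ω(z) = Σ_{ℓ=0}^n binom(n,ℓ) · (−ω)_ℓ/(−n−ω)_ℓ · z^{n−ℓ}`,
where `(a)_ℓ` is the Pochhammer (rising factorial) symbol. -/
noncomputable def skyburst (n : ℕ) (ω : ℝ) (z : ℂ) : ℂ :=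
  ∑ ℓ ∈ Finset.range (n + 1),
    (n.choose ℓ : ℂ) *
      ((ascPochhammer ℂ ℓ).eval (-(ω : ℂ)) / (ascPochhammer ℂ ℓ).eval (-(n : ℂ) - (ω : ℂ))) *
      z ^ (n - ℓ)

/-!
`P = S_n^ω` solves the hypergeometric equation (in `-z`)
`z (z + 1) P'' + ((ω + 1 - n) (z + 1) + z) P' = n (ω + 1) P`,
because its coefficients satisfy the matching two-term recurrence. Differentiating `k` times gives
a three-term relation between `P^(k)`, `P^(k+1)`, `P^(k+2)` with leading coefficient `z (z + 1)`;
at `z = -1` it degenerates to a two-term relation with leading coefficient `-(k + 1)`. Either way,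
`P(z) = P'(z) = 0` at some `z ≠ 0` forces every derivative of `P` to vanish at `z`, so `P = 0`,
which is absurd for a monic polynomial.
-/

namespace Polynomial

section Ode

variable {R : Type*} [CommRing R] {P : R[X]} {b c : R}

theorem ode_of_coeff_succ
    (h : ∀ k : ℕ, ((k : R) + 1) * (k + b) * P.coeff (k + 1) = (c - k * (k + b)) * P.coeff k) :
    X * (X + 1) * derivative (derivative P) + (C b * (X + 1) + X) * derivative P = C c * P := by
  have hsplit : X * (X + 1) * derivative (derivative P) + (C b * (X + 1) + X) * derivative P
      = derivative (derivative P) * X ^ 2 + derivative (derivative P) * X ^ 1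
        + C b * (derivative P * X ^ 1) + derivative P * X ^ 1 + C b * derivative P := by ring
  rw [hsplit]
  ext k
  simp only [coeff_add, coeff_mul_X_pow', coeff_C_mul, coeff_derivative]
  match k with
  | 0 =>
    simp only [if_neg (show ¬ 2 ≤ 0 by omega), if_neg (show ¬ 1 ≤ 0 by omega)]
    linear_combination h 0
  | 1 =>
    simp only [if_neg (show ¬ 2 ≤ 1 by omega), if_pos le_rfl]
    push_cast
    linear_combination h 1
  | k + 2 =>
    simp only [if_pos (show 2 ≤ k + 2 by omega), if_pos (show 1 ≤ k + 2 by omega),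
      show k + 2 - 2 = k by omega, show k + 2 - 1 = k + 1 by omega]
    have hk := h (k + 2)
    push_cast at hk ⊢
    linear_combination hk

theorem iterate_derivative_ode
    (h : X * (X + 1) * derivative (derivative P) + (C b * (X + 1) + X) * derivative P
      = C c * P) (k : ℕ) :
    X * (X + 1) * derivative^[k + 2] P + (C (b + 1 + 2 * k) * X + C (b + k)) * derivative^[k + 1] P
      + C (k * (b + k) - c) * derivative^[k] P = 0 := by
  induction k with
  | zero =>
    simp only [Function.iterate_succ, Function.iterate_zero, Function.comp_apply, id_eq,
      Nat.cast_zero, mul_zero, add_zero, zero_mul, zero_sub, map_neg, neg_mul, map_add,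
      map_one]
    linear_combination h
  | succ k ih =>
    have h' := congrArg derivative ih
    simp only [derivative_add, derivative_mul, derivative_X, derivative_one, derivative_C,
      zero_mul, zero_add, add_zero, mul_one, one_mul, derivative_zero,
      ← Function.iterate_succ_apply' derivative] at h'
    simp only [map_add, map_sub, map_mul, map_natCast, map_ofNat, map_one, Nat.cast_succ] at h' ⊢
    linear_combination h'

theorem iterate_derivative_eval_eq_zero_of_ode [IsDomain R] [CharZero R]
    (h : X * (X + 1) * derivative (derivative P) + (C b * (X + 1) + X) * derivative P
      = C c * P) {z : R} (hz : z ≠ 0) (h0 : P.eval z = 0) (h1 : (derivative P).eval z = 0)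
    (k : ℕ) : (derivative^[k] P).eval z = 0 := by
  set s : ℕ → R := fun k => (derivative^[k] P).eval z
  have hs (k : ℕ) : z * (z + 1) * s (k + 2) + ((b + 1 + 2 * k) * z + (b + k)) * s (k + 1)
      + (k * (b + k) - c) * s k = 0 := by
    simpa only [eval_add, eval_mul, eval_X, eval_one, eval_C, eval_zero]
      using congrArg (eval z) (iterate_derivative_ode h k)
  suffices ∀ k, s k = 0 ∧ s (k + 1) = 0 from (this k).1
  intro k
  induction k with
  | zero => exact ⟨h0, h1⟩
  | succ k ih =>
    refine ⟨ih.2, ?_⟩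
    by_cases hz1 : z + 1 = 0
    · have hk := hs (k + 1)
      rw [show z = -1 by linear_combination hz1] at hk
      have hk2 : ((k + 2 : ℕ) : R) * s (k + 2) = 0 := by
        push_cast at hk ⊢
        linear_combination -hk + ((k + 1) * (b + (k + 1)) - c) * ih.2
      exact (mul_eq_zero.mp hk2).resolve_left (Nat.cast_ne_zero.mpr (by omega))
    · have hk2 : z * (z + 1) * s (k + 2) = 0 := by
        linear_combination hs k - ((b + 1 + 2 * k) * z + (b + k)) * ih.2
          - (k * (b + k) - c) * ih.1
      exact (mul_eq_zero.mp hk2).resolve_left (mul_ne_zero hz hz1)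

theorem eq_zero_of_iterate_derivative_eval_eq_zero [IsDomain R] [CharZero R] {z : R} (h : ∀ k, (derivative^[k] P).eval z = 0) : P = 0 := by
  refine eq_zero_of_hasseDeriv_eq_zero P z fun k => ?_
  have hk : (k.factorial : R) * (hasseDeriv k P).eval z = 0 := by
    rw [← nsmul_eq_mul, ← eval_smul, ← LinearMap.smul_apply, factorial_smul_hasseDeriv, h k]
  exact (mul_eq_zero.mp hk).resolve_left (Nat.cast_ne_zero.mpr k.factorial_ne_zero)

theorem eq_zero_of_ode [IsDomain R] [CharZero R]
    (h : X * (X + 1) * derivative (derivative P) + (C b * (X + 1) + X) * derivative P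
      = C c * P) {z : R} (hz : z ≠ 0) (h0 : P.eval z = 0) (h1 : (derivative P).eval z = 0) :
    P = 0 :=
  eq_zero_of_iterate_derivative_eval_eq_zero (iterate_derivative_eval_eq_zero_of_ode h hz h0 h1)

end Ode

end Polynomial

noncomputable def skyburstCoeff (n : ℕ) (ω : ℝ) (ℓ : ℕ) : ℂ :=
  (n.choose ℓ : ℂ) *
    ((ascPochhammer ℂ ℓ).eval (-(ω : ℂ)) / (ascPochhammer ℂ ℓ).eval (-(n : ℂ) - (ω : ℂ)))

noncomputable def skyburstPoly (n : ℕ) (ω : ℝ) : ℂ[X] :=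
  ∑ k ∈ range (n + 1), C (skyburstCoeff n ω (n - k)) * X ^ k

theorem eval_skyburstPoly (n : ℕ) (ω : ℝ) (z : ℂ) :
    (skyburstPoly n ω).eval z = skyburst n ω z := by
  rw [skyburstPoly, skyburst, eval_finsetSum, ← sum_range_reflect]
  refine sum_congr rfl fun ℓ hℓ => ?_
  rw [Nat.add_sub_cancel, Nat.sub_sub_self (mem_range_succ_iff.mp hℓ)]
  simp [skyburstCoeff]

theorem skyburstPoly_coeff (n : ℕ) (ω : ℝ) (k : ℕ) :
    (skyburstPoly n ω).coeff k = if k ≤ n then skyburstCoeff n ω (n - k) else 0 := by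
  simp [skyburstPoly, finsetSum_coeff]

theorem skyburstPoly_ne_zero (n : ℕ) (ω : ℝ) : skyburstPoly n ω ≠ 0 := by
  intro h
  simpa [h, skyburstCoeff] using skyburstPoly_coeff n ω n

theorem skyburstCoeff_succ {n : ℕ} {ω : ℝ} {ℓ : ℕ} (hω : ∀ m < n, ω ≠ m - n) (hℓ : ℓ < n) :
    ((ℓ : ℂ) + 1) * (ℓ - n - ω) * skyburstCoeff n ω (ℓ + 1)
      = (n - ℓ) * (ℓ - ω) * skyburstCoeff n ω ℓ := by
  have hω' : ∀ m < n, (m : ℂ) ≠ n + ω := fun m hm h =>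
    hω m hm (by exact_mod_cast (by linear_combination -h : (ω : ℂ) = m - n))
  have hpoch : (ascPochhammer ℂ ℓ).eval (-(n : ℂ) - ω) ≠ 0 := by
    rw [Ne, ascPochhammer_eval_eq_zero_iff]
    rintro ⟨m, hm, h⟩
    exact hω' m (hm.trans hℓ) (by linear_combination h)
  have hfactor : -(n : ℂ) - ω + ℓ ≠ 0 := fun h => hω' ℓ hℓ (by linear_combination h)
  have hchoose : (n.choose (ℓ + 1) : ℂ) * (ℓ + 1) = n.choose ℓ * (n - ℓ) := by
    rw [← Nat.cast_sub hℓ.le]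
    exact_mod_cast Nat.choose_succ_right_eq n ℓ
  rw [skyburstCoeff, skyburstCoeff, ascPochhammer_succ_right]
  simp only [eval_mul, eval_add, eval_X, eval_natCast]
  field_simp
  linear_combination (ℓ - n - ω) * (ℓ - ω) * (ascPochhammer ℂ ℓ).eval (-(ω : ℂ)) * hchoose

theorem skyburstPoly_coeff_succ {n : ℕ} {ω : ℝ} (hω : ∀ m < n, ω ≠ m - n) (k : ℕ) :
    ((k : ℂ) + 1) * (k + ω + 1 - n) * (skyburstPoly n ω).coeff (k + 1)
      = (n - k) * (k + ω + 1) * (skyburstPoly n ω).coeff k := by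
  rw [skyburstPoly_coeff, skyburstPoly_coeff]
  rcases lt_trichotomy k n with hk | rfl | hk
  · have h := skyburstCoeff_succ hω (show n - (k + 1) < n by omega)
    rw [show n - (k + 1) + 1 = n - k by omega, Nat.cast_sub (show k + 1 ≤ n by omega)] at h
    rw [if_pos (show k + 1 ≤ n from hk), if_pos hk.le]
    push_cast at h
    linear_combination h
  · simp
  · rw [if_neg (by omega), if_neg (by omega)]
    ring

theorem skyburstPoly_ode {n : ℕ} {ω : ℝ} (hω : ∀ m < n, ω ≠ m - n) :
    X * (X + 1) * derivative (derivative (skyburstPoly n ω))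
      + (C ((ω : ℂ) + 1 - n) * (X + 1) + X) * derivative (skyburstPoly n ω)
      = C ((n : ℂ) * (ω + 1)) * skyburstPoly n ω :=
  ode_of_coeff_succ fun k => by linear_combination skyburstPoly_coeff_succ hω k

theorem skyburst_zeros_simple_general (ω : ℝ) (hω : 0 < ω) (n : ℕ)
    (z : ℂ) (hz : z ≠ 0) (h0 : skyburst n ω z = 0) :
    deriv (skyburst n ω) z ≠ 0 := by
  have hω' : ∀ m < n, ω ≠ m - n := fun m hm => by
    have : (m : ℝ) < n := by exact_mod_cast hm
    linarith
  have hP : skyburst n ω = fun w => (skyburstPoly n ω).eval w :=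
    funext fun w => (eval_skyburstPoly n ω w).symm
  rw [hP, Polynomial.deriv]
  rw [hP] at h0
  intro h1
  exact skyburstPoly_ne_zero n ω (eq_zero_of_ode (skyburstPoly_ode hω') hz h0 h1)

theorem skyburst_zeros_simple (ω : ℝ) (hω : 0 < ω) (n : ℕ) (hn : 1 ≤ n)
    (z : ℂ) (hz : z ≠ 0) (h0 : skyburst n ω z = 0) :
    deriv (skyburst n ω) z ≠ 0 :=
  skyburst_zeros_simple_general ω hω n z hz h0
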